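/- Let d ≥ 2 and ε₀ ∈ (0, 1). Then the (d−1)-dimensional surface measure of the spherical cap ∂B_R(0) ∩ B_1(x_{R+t}), where x_{R+t} = (R+t, 0, …, 0), satisfies inf_{R ≥ 1} inf_{t ∈ [−1+ε₀, 1−ε₀]} |∂B_R(0) ∩ B_1(x_{R+t})| > 0; more precisely, this measure is comparable (with constants depending only on d) to (R² − a(R,t)²)^{(d−1)/2}, where {x₁ = a(R,t)} is the hyperplane containing ∂B_R(0) ∩ ∂B_1(x_{R+t}), and R² − a(R,t)² ≥ ε₀/4 for all R ≥ 1 and |t| ≤ 1−ε₀. -/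

import Mathlib

open MeasureTheory Metric Set Filter ENNReal
noncomputable section

abbrev Euc (d : ℕ) := EuclideanSpace ℝ (Fin d)

/-- The `(d-1)`-dimensional (Hausdorff) surface measure of the spherical cap
`∂B_R(0) ∩ B_1((R+t) • e)`. -/
def capMeasure (d : ℕ) (e : Euc d) (R t : ℝ) : ℝ≥0∞ :=
  μH[(d : ℝ) - 1] (sphere (0 : Euc d) R ∩ ball ((R + t) • e) 1)

/-- The abscissa `a(R,t)` of the hyperplane containing `∂B_R(0) ∩ ∂B_1((R+t)e₁)`. -/
def capAbscissa (R t : ℝ) : ℝ :=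
  (R ^ 2 + (R + t) ^ 2 - 1) / (2 * (R + t))

/-!
Write `a = capAbscissa R t` and `r = √(R² - a²)`. Since `2 (R + t) a = R² + (R + t)² - 1`, the
cap is `{x ∈ ∂B_R : ⟪e, x⟫ > a}`, and `4 (R + t)² r² = (1 - t²) ((2R + t)² - 1)` gives
`r² ≥ ε₀ / 4`.

The orthogonal projection onto `eᗮ ≅ ℝ^(d-1)` is 1-Lipschitz and maps the cap onto a set
containing the ball of radius `r`; as `μH[d-1]` is a Haar measure on `ℝ^(d-1)`, this is the lower
bound. On the cap the projection has a `(1 + R / a)`-Lipschitz inverse (the cap is a graph over the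
closed ball of radius `r`), which gives the upper bound when `a ≥ R / √2`. When `a < R / √2` we
have `R < √2 r`, and the whole sphere, covered by `2d` such graphs, has measure `≲ R^(d-1)`.
-/

open Module Submodule RealInnerProductSpace Function
open scoped NNReal

theorem MeasureTheory.Measure.hausdorffMeasure_le_mul_image_of_dist_le {X Y : Type*}
    [MetricSpace X] [MeasurableSpace X] [BorelSpace X]
    [MetricSpace Y] [MeasurableSpace Y] [BorelSpace Y]
    {f : X → Y} {s : Set X} {K : ℝ≥0} (h : ∀ x ∈ s, ∀ y ∈ s, dist x y ≤ K * dist (f x) (f y))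
    {d : ℝ} (hd : 0 ≤ d) : μH[d] s ≤ (K : ℝ≥0∞) ^ d * μH[d] (f '' s) := by
  rcases s.eq_empty_or_nonempty with rfl | ⟨x₀, -⟩
  · simp
  have : Nonempty X := ⟨x₀⟩
  have hinj : InjOn f s := fun x hx y hy hxy =>
    dist_le_zero.mp (by simpa [hxy] using h x hx y hy)
  have hlip : LipschitzOnWith K (invFunOn f s) (f '' s) := by
    refine LipschitzOnWith.of_dist_le_mul ?_
    rintro _ ⟨x, hx, rfl⟩ _ ⟨y, hy, rfl⟩
    rw [hinj.leftInvOn_invFunOn hx, hinj.leftInvOn_invFunOn hy]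
    exact h x hx y hy
  calc μH[d] s = μH[d] (invFunOn f s '' (f '' s)) := by
        rw [hinj.leftInvOn_invFunOn.image_image]
    _ ≤ (K : ℝ≥0∞) ^ d * μH[d] (f '' s) := hlip.hausdorffMeasure_image_le hd

section SphereCaps

variable {E : Type*} [NormedAddCommGroup E] [InnerProductSpace ℝ E]

def sphereCap (u : E) (R a : ℝ) : Set E := {x | ‖x‖ = R ∧ a < ⟪u, x⟫}

theorem sphere_inter_ball_eq_sphereCap {u : E} (hu : ‖u‖ = 1) {R s a : ℝ} (hs : 0 < s)
    (ha : 2 * s * a = R ^ 2 + s ^ 2 - 1) :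
    sphere 0 R ∩ ball (s • u) 1 = sphereCap u R a := by
  ext x
  have hdist : dist x (s • u) ^ 2 = ‖x‖ ^ 2 - 2 * s * ⟪u, x⟫ + s ^ 2 := by
    rw [dist_eq_norm, norm_sub_sq_real, real_inner_smul_right, real_inner_comm, norm_smul, hu,
      Real.norm_of_nonneg hs.le]
    ring
  simp only [mem_inter_iff, mem_sphere_zero_iff_norm, mem_ball, sphereCap, mem_ofPred_eq]
  refine and_congr_right fun hx => ?_
  rw [← abs_of_nonneg dist_nonneg, ← sq_lt_one_iff_abs_lt_one, hdist, hx]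
  constructor <;> intro h <;> nlinarith

theorem sphere_subset_iUnion_sphereCap {n : ℕ} (b : OrthonormalBasis (Fin (n + 1)) ℝ E)
    {R : ℝ} (hR : 0 < R) :
    sphere (0 : E) R ⊆
      ⋃ i, (sphereCap (b i) R (R / (n + 2)) ∪ sphereCap (-b i) R (R / (n + 2))) := by
  intro x hx
  rw [mem_sphere_zero_iff_norm] at hx
  have hsum : ∑ i, ⟪b i, x⟫ ^ 2 = R ^ 2 := by
    rw [← hx, ← real_inner_self_eq_norm_sq, ← b.sum_inner_mul_inner x x]
    simp [sq, real_inner_comm]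
  obtain ⟨i, -, hi⟩ : ∃ i ∈ Finset.univ, (R / (n + 2)) ^ 2 < ⟪b i, x⟫ ^ 2 := by
    refine Finset.exists_lt_of_sum_lt ?_
    rw [hsum, Finset.sum_const, Finset.card_univ, Fintype.card_fin, nsmul_eq_mul, div_pow,
      mul_div_assoc', div_lt_iff₀ (by positivity)]
    have hn : ((n + 1 : ℕ) : ℝ) < (n + 2) ^ 2 := by push_cast; nlinarith
    nlinarith [mul_lt_mul_of_pos_left hn (pow_pos hR 2)]
  rw [sq_lt_sq, abs_of_pos (by positivity), lt_abs] at hi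
  refine mem_iUnion.mpr ⟨i, hi.imp (fun h => ⟨hx, h⟩) (fun h => ⟨hx, ?_⟩)⟩
  rwa [inner_neg_left]

variable (n : ℕ) [Fact (finrank ℝ E = n + 1)] {u : E} (hu : ‖u‖ = 1)

def orthogonalCoords : E →L[ℝ] Euc n :=
  (OrthonormalBasis.fromOrthogonalSpanSingleton n
      (norm_ne_zero_iff.mp (hu ▸ one_ne_zero))).repr.toContinuousLinearEquiv.toContinuousLinearMap
    ∘L (ℝ ∙ u)ᗮ.orthogonalProjectionOnto

include hu in
theorem norm_sq_eq_inner_sq_add_norm_orthogonalCoords_sq (x : E) :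
    ‖x‖ ^ 2 = ⟪u, x⟫ ^ 2 + ‖orthogonalCoords n hu x‖ ^ 2 := by
  have : FiniteDimensional ℝ E := .of_fact_finrank_eq_succ n
  rw [norm_sq_eq_add_norm_sq_projection x (ℝ ∙ u)]
  simp [orthogonalCoords, starProjection_unit_singleton ℝ hu, norm_smul, hu]

theorem exists_orthogonalCoords_eq_and_inner_eq (z : Euc n) (t : ℝ) :
    ∃ x : E, orthogonalCoords n hu x = z ∧ ⟪u, x⟫ = t := by
  have : FiniteDimensional ℝ E := .of_fact_finrank_eq_succ n
  set b := OrthonormalBasis.fromOrthogonalSpanSingleton (𝕜 := ℝ) n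
    (norm_ne_zero_iff.mp (hu ▸ one_ne_zero))
  refine ⟨(b.repr.symm z : E) + t • u, ?_, ?_⟩
  · simp [orthogonalCoords, b, orthogonalProjectionOnto_orthogonalComplement_singleton_eq_zero]
  · have h0 : ⟪u, (b.repr.symm z : E)⟫ = 0 :=
      mem_orthogonal_singleton_iff_inner_right.mp (b.repr.symm z).2
    simp [inner_add_right, inner_smul_right, h0, hu]

theorem lipschitzWith_one_orthogonalCoords : LipschitzWith 1 (orthogonalCoords n hu) := by
  refine LipschitzWith.of_dist_le_mul fun x y => ?_
  rw [dist_eq_norm, dist_eq_norm, ← map_sub, NNReal.coe_one, one_mul]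
  have := norm_sq_eq_inner_sq_add_norm_orthogonalCoords_sq n hu (x - y)
  nlinarith [sq_nonneg ⟪u, x - y⟫, norm_nonneg (x - y),
    norm_nonneg (orthogonalCoords n hu (x - y))]

include hu in
theorem ball_subset_orthogonalCoords_image_sphereCap {R a : ℝ} (hR : 0 ≤ R) (ha : 0 ≤ a) :
    ball 0 (√(R ^ 2 - a ^ 2)) ⊆ orthogonalCoords n hu '' sphereCap u R a := by
  intro z hz
  rw [mem_ball_zero_iff, Real.lt_sqrt (norm_nonneg z)] at hz
  obtain ⟨x, hxz, hxu⟩ := exists_orthogonalCoords_eq_and_inner_eq n hu z √(R ^ 2 - ‖z‖ ^ 2)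
  refine ⟨x, ⟨?_, ?_⟩, hxz⟩
  · have := norm_sq_eq_inner_sq_add_norm_orthogonalCoords_sq n hu x
    rw [hxu, hxz, Real.sq_sqrt (by nlinarith)] at this
    exact (sq_eq_sq₀ (norm_nonneg x) hR).mp (by linarith)
  · rw [hxu]
    exact (Real.lt_sqrt ha).mpr (by linarith)

include hu in
theorem orthogonalCoords_image_sphereCap_subset_closedBall {R a : ℝ} (ha : 0 ≤ a) :
    orthogonalCoords n hu '' sphereCap u R a ⊆ closedBall 0 √(R ^ 2 - a ^ 2) := by
  rintro _ ⟨x, ⟨hxR, hxa⟩, rfl⟩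
  have := norm_sq_eq_inner_sq_add_norm_orthogonalCoords_sq n hu x
  rw [hxR] at this
  rw [mem_closedBall_zero_iff]
  exact Real.le_sqrt_of_sq_le (by nlinarith [pow_lt_pow_left₀ hxa ha two_ne_zero])

include hu in
theorem dist_le_of_mem_sphereCap {R a : ℝ} (ha : 0 < a) {x y : E} (hx : x ∈ sphereCap u R a)
    (hy : y ∈ sphereCap u R a) :
    dist x y ≤ (1 + R / a) * dist (orthogonalCoords n hu x) (orthogonalCoords n hu y) := by
  have hPx := norm_sq_eq_inner_sq_add_norm_orthogonalCoords_sq n hu x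
  have hPy := norm_sq_eq_inner_sq_add_norm_orthogonalCoords_sq n hu y
  have hxy := norm_sq_eq_inner_sq_add_norm_orthogonalCoords_sq n hu (x - y)
  rw [map_sub, inner_sub_right, ← dist_eq_norm, ← dist_eq_norm] at hxy
  set P := orthogonalCoords n hu
  set δ := dist (P x) (P y)
  obtain ⟨hxR, hxa⟩ := hx
  obtain ⟨hyR, hya⟩ := hy
  have hR : 0 ≤ R := hxR ▸ norm_nonneg x
  have hnorms : |‖P x‖ - ‖P y‖| ≤ δ := abs_norm_sub_norm_le _ _
  -- `(⟪u,x⟫ - ⟪u,y⟫) (⟪u,x⟫ + ⟪u,y⟫) = ‖P y‖² - ‖P x‖²`, and `⟪u,x⟫ + ⟪u,y⟫ > 2a`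
  have hinner : |⟪u, x⟫ - ⟪u, y⟫| * a ≤ R * δ := by
    have hPxR : ‖P x‖ ≤ R := by nlinarith [norm_nonneg (P x)]
    have hPyR : ‖P y‖ ≤ R := by nlinarith [norm_nonneg (P y)]
    have key : |⟪u, x⟫ - ⟪u, y⟫| * (⟪u, x⟫ + ⟪u, y⟫)
        = |‖P x‖ - ‖P y‖| * (‖P x‖ + ‖P y‖) := by
      rw [← abs_of_pos (by linarith : 0 < ⟪u, x⟫ + ⟪u, y⟫),
        ← abs_of_nonneg (by positivity : 0 ≤ ‖P x‖ + ‖P y‖), ← abs_mul, ← abs_mul]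
      exact abs_eq_abs.mpr (Or.inr (by nlinarith))
    nlinarith [abs_nonneg (⟪u, x⟫ - ⟪u, y⟫), abs_nonneg (‖P x‖ - ‖P y‖)]
  have hsplit : dist x y ≤ |⟪u, x⟫ - ⟪u, y⟫| + δ := by
    nlinarith [abs_nonneg (⟪u, x⟫ - ⟪u, y⟫), sq_abs (⟪u, x⟫ - ⟪u, y⟫),
      dist_nonneg (x := x) (y := y), dist_nonneg (x := P x) (y := P y)]
  have hdiff : |⟪u, x⟫ - ⟪u, y⟫| ≤ R / a * δ := by
    rwa [div_mul_eq_mul_div, le_div_iff₀ ha]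
  linarith [add_mul 1 (R / a) δ]

variable [MeasurableSpace E] [BorelSpace E]

include hu in
theorem le_hausdorffMeasure_sphereCap {R a : ℝ} (ha : 0 ≤ a) (haR : a < R) :
    ENNReal.ofReal (√(R ^ 2 - a ^ 2) ^ n) * μH[n] (ball (0 : Euc n) 1)
      ≤ μH[n] (sphereCap u R a) := by
  have hr : 0 < √(R ^ 2 - a ^ 2) := Real.sqrt_pos.mpr (by nlinarith)
  calc _ = μH[n] (ball (0 : Euc n) √(R ^ 2 - a ^ 2)) := by
        rw [Measure.addHaar_ball_of_pos _ _ hr, finrank_euclideanSpace_fin]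
    _ ≤ μH[n] (orthogonalCoords n hu '' sphereCap u R a) :=
        measure_mono (ball_subset_orthogonalCoords_image_sphereCap n hu (by linarith) ha)
    _ ≤ μH[n] (sphereCap u R a) := by
        simpa using (lipschitzWith_one_orthogonalCoords n hu).hausdorffMeasure_image_le
          (Nat.cast_nonneg n) (sphereCap u R a)

include hu in
theorem hausdorffMeasure_sphereCap_le {R a : ℝ} (hR : 0 ≤ R) (ha : 0 < a) :
    μH[n] (sphereCap u R a)
      ≤ ENNReal.ofReal ((1 + R / a) ^ n * √(R ^ 2 - a ^ 2) ^ n)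
        * μH[n] (ball (0 : Euc n) 1) := by
  have hK : 0 ≤ 1 + R / a := by positivity
  set K := (1 + R / a).toNNReal
  calc μH[n] (sphereCap u R a)
      ≤ (K : ℝ≥0∞) ^ (n : ℝ) * μH[n] (orthogonalCoords n hu '' sphereCap u R a) :=
        Measure.hausdorffMeasure_le_mul_image_of_dist_le (fun x hx y hy =>
          (dist_le_of_mem_sphereCap n hu ha hx hy).trans_eq (by rw [Real.coe_toNNReal _ hK]))
          (Nat.cast_nonneg n)
    _ ≤ (K : ℝ≥0∞) ^ (n : ℝ) * μH[n] (closedBall (0 : Euc n) √(R ^ 2 - a ^ 2)) := by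
        gcongr
        exact orthogonalCoords_image_sphereCap_subset_closedBall n hu ha.le
    _ = _ := by
        rw [Measure.addHaar_closedBall _ _ (Real.sqrt_nonneg _), finrank_euclideanSpace_fin,
          ← mul_assoc, ENNReal.rpow_natCast, ENNReal.ofReal_mul (by positivity),
          ENNReal.ofReal_pow hK]
        rfl

theorem hausdorffMeasure_sphere_le {R : ℝ} (hR : 0 < R) :
    μH[n] (sphere (0 : E) R)
      ≤ ENNReal.ofReal (2 * (n + 1) * (n + 3) ^ n * R ^ n) * μH[n] (ball (0 : Euc n) 1) := by
  have : FiniteDimensional ℝ E := .of_fact_finrank_eq_succ n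
  set b := (stdOrthonormalBasis ℝ E).reindex (finCongr (Fact.out : finrank ℝ E = n + 1))
  have hcap : ∀ v : E, ‖v‖ = 1 → μH[n] (sphereCap v R (R / (n + 2)))
      ≤ ENNReal.ofReal ((n + 3) ^ n * R ^ n) * μH[n] (ball (0 : Euc n) 1) := by
    intro v hv
    refine (hausdorffMeasure_sphereCap_le n hv hR.le (by positivity)).trans ?_
    have hK : 1 + R / (R / (n + 2)) = n + 3 := by rw [div_div_cancel₀ hR.ne']; ring
    have hr : √(R ^ 2 - (R / (n + 2)) ^ 2) ≤ R :=
      (Real.sqrt_le_left hR.le).mpr (by nlinarith [sq_nonneg (R / (n + 2))])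
    rw [hK]
    gcongr
  have hunit : ∀ i, ‖b i‖ = 1 := b.orthonormal.1
  calc μH[n] (sphere (0 : E) R)
      ≤ ∑ i, μH[n] (sphereCap (b i) R (R / (n + 2)) ∪ sphereCap (-b i) R (R / (n + 2))) :=
        (measure_mono (sphere_subset_iUnion_sphereCap b hR)).trans (measure_iUnion_fintype_le _ _)
    _ ≤ ∑ _i : Fin (n + 1),
          2 * (ENNReal.ofReal ((n + 3) ^ n * R ^ n) * μH[n] (ball (0 : Euc n) 1)) :=
        Finset.sum_le_sum fun i _ => (measure_union_le _ _).trans <| by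
          rw [two_mul]
          exact add_le_add (hcap _ (hunit i)) (hcap _ (by rw [norm_neg, hunit i]))
    _ = _ := by
        rw [Finset.sum_const, Finset.card_univ, Fintype.card_fin, nsmul_eq_mul,
          show (2 : ℝ) * (n + 1) * (n + 3) ^ n * R ^ n
            = ((2 * (n + 1) : ℕ) : ℝ) * ((n + 3) ^ n * R ^ n) by push_cast; ring,
          ENNReal.ofReal_mul (Nat.cast_nonneg _), ENNReal.ofReal_natCast]
        push_cast
        ring

include hu in
theorem hausdorffMeasure_sphereCap_le_uniform {R a : ℝ} (ha : 0 < a) (haR : a < R) :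
    μH[n] (sphereCap u R a)
      ≤ ENNReal.ofReal (2 * (n + 1) * (2 * n + 6) ^ n * √(R ^ 2 - a ^ 2) ^ n)
        * μH[n] (ball (0 : Euc n) 1) := by
  have hR : 0 < R := ha.trans haR
  have hr : √(R ^ 2 - a ^ 2) ^ 2 = R ^ 2 - a ^ 2 := Real.sq_sqrt (by nlinarith)
  have hr0 : 0 ≤ √(R ^ 2 - a ^ 2) := Real.sqrt_nonneg _
  rcases le_or_gt (R ^ 2) (2 * a ^ 2) with hsteep | hshallow
  · refine (hausdorffMeasure_sphereCap_le n hu hR.le ha).trans ?_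
    have hslope : 1 + R / a ≤ 2 * n + 6 := by
      have : R / a ≤ 2 := (div_le_iff₀ ha).mpr (by nlinarith)
      linarith
    gcongr ENNReal.ofReal ?_ * _
    calc (1 + R / a) ^ n * √(R ^ 2 - a ^ 2) ^ n
        ≤ (2 * n + 6) ^ n * √(R ^ 2 - a ^ 2) ^ n := by gcongr
      _ ≤ 2 * (n + 1) * ((2 * n + 6) ^ n * √(R ^ 2 - a ^ 2) ^ n) :=
          le_mul_of_one_le_left (by positivity) (by linarith [(n.cast_nonneg : (0 : ℝ) ≤ n)])
      _ = _ := by ring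
  · -- here `R < √2 · √(R² - a²)`, so the bound for the whole sphere suffices
    refine (measure_mono fun x hx => mem_sphere_zero_iff_norm.mpr hx.1).trans
      ((hausdorffMeasure_sphere_le n hR).trans ?_)
    have hR2 : R ≤ 2 * √(R ^ 2 - a ^ 2) := by nlinarith
    gcongr ENNReal.ofReal ?_ * _
    calc 2 * (n + 1) * (n + 3) ^ n * R ^ n
        ≤ 2 * (n + 1) * (n + 3) ^ n * (2 * √(R ^ 2 - a ^ 2)) ^ n := by gcongr
      _ = _ := by rw [mul_pow, show (2 * n + 6 : ℝ) = 2 * (n + 3) by ring, mul_pow]; ring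

end SphereCaps

theorem two_mul_mul_capAbscissa {R t : ℝ} (h : R + t ≠ 0) :
    2 * (R + t) * capAbscissa R t = R ^ 2 + (R + t) ^ 2 - 1 := by
  rw [capAbscissa]
  field_simp

theorem capAbscissa_pos {R t : ℝ} (hR : 1 ≤ R) (h : 0 < R + t) : 0 < capAbscissa R t := by
  rw [capAbscissa]
  exact div_pos (by nlinarith) (by linarith)

theorem le_sq_sub_capAbscissa_sq {R t ε₀ : ℝ} (hR : 1 ≤ R) (hε₀ : 0 < ε₀) (hε₁ : ε₀ ≤ 1)
    (ht : t ∈ Icc (-1 + ε₀) (1 - ε₀)) : ε₀ / 4 ≤ R ^ 2 - capAbscissa R t ^ 2 := by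
  obtain ⟨ht₁, ht₂⟩ := ht
  have hs : 0 < R + t := by linarith
  have key : 4 * (R + t) ^ 2 * (R ^ 2 - capAbscissa R t ^ 2)
      = (1 - t ^ 2) * ((2 * R + t) ^ 2 - 1) := by
    linear_combination (-(R ^ 2 + (R + t) ^ 2 - 1) - 2 * (R + t) * capAbscissa R t)
      * two_mul_mul_capAbscissa hs.ne'
  have h1 : ε₀ ≤ 1 - t ^ 2 := by nlinarith
  have h2 : (R + t) ^ 2 ≤ (2 * R + t) ^ 2 - 1 := by nlinarith
  nlinarith [mul_le_mul h1 h2 (sq_nonneg _) (by linarith), mul_pos hs hs]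

theorem stmt8 (d : ℕ) (hd : 2 ≤ d) :
    ∃ c₁ c₂ : ℝ, 0 < c₁ ∧ 0 < c₂ ∧
      ∀ ε₀ : ℝ, ε₀ ∈ Ioo (0 : ℝ) 1 →
        ∃ c₃ : ℝ, 0 < c₃ ∧
          ∀ e : Euc d, ‖e‖ = 1 →
            ∀ R : ℝ, 1 ≤ R → ∀ t : ℝ, t ∈ Icc (-1 + ε₀) (1 - ε₀) →
              ε₀ / 4 ≤ R ^ 2 - capAbscissa R t ^ 2 ∧
              ENNReal.ofReal (c₁ * (R ^ 2 - capAbscissa R t ^ 2) ^ (((d : ℝ) - 1) / 2))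
                ≤ capMeasure d e R t ∧
              capMeasure d e R t
                ≤ ENNReal.ofReal (c₂ * (R ^ 2 - capAbscissa R t ^ 2) ^ (((d : ℝ) - 1) / 2)) ∧
              ENNReal.ofReal c₃ ≤ capMeasure d e R t := by
  obtain ⟨n, rfl⟩ : ∃ n, d = n + 1 := ⟨d - 1, by omega⟩
  have : Fact (finrank ℝ (Euc (n + 1)) = n + 1) := ⟨finrank_euclideanSpace_fin⟩
  set β := μH[n] (ball (0 : Euc n) 1)
  have hβ : ∀ x, ENNReal.ofReal (β.toReal * x) = ENNReal.ofReal x * β := fun x => by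
    rw [mul_comm, ENNReal.ofReal_mul' ENNReal.toReal_nonneg,
      ENNReal.ofReal_toReal measure_ball_lt_top.ne]
  have hβ0 : 0 < β.toReal := ENNReal.toReal_pos (measure_ball_pos _ _ one_pos).ne'
    measure_ball_lt_top.ne
  refine ⟨β.toReal, β.toReal * (2 * (n + 1) * (2 * n + 6) ^ n), hβ0, by positivity,
    fun ε₀ hε => ⟨β.toReal * √(ε₀ / 4) ^ n, by have := hε.1; positivity,
      fun e he R hR t ht => ?_⟩⟩
  have hs : 0 < R + t := by linarith [ht.1, hε.1]
  set a := capAbscissa R t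
  have ha : 0 < a := capAbscissa_pos hR hs
  have hgap : ε₀ / 4 ≤ R ^ 2 - a ^ 2 := le_sq_sub_capAbscissa_sq hR hε.1 hε.2.le ht
  have haR : a < R := by nlinarith [hε.1]
  have hcap : capMeasure (n + 1) e R t = μH[n] (sphereCap e R a) := by
    rw [capMeasure, Nat.cast_succ, add_sub_cancel_right,
      sphere_inter_ball_eq_sphereCap he hs (two_mul_mul_capAbscissa hs.ne')]
  rw [hcap, Nat.cast_succ, add_sub_cancel_right, Real.rpow_div_two_eq_sqrt _ (by linarith [hε.1]),
    Real.rpow_natCast]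
  refine ⟨hgap, ?_, ?_, ?_⟩
  · rw [hβ]
    exact le_hausdorffMeasure_sphereCap n he ha.le haR
  · rw [mul_assoc, hβ]
    exact hausdorffMeasure_sphereCap_le_uniform n he ha haR
  · rw [hβ]
    refine le_trans ?_ (le_hausdorffMeasure_sphereCap n he ha.le haR)
    gcongr
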